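/- Let G = (V, E, w) be a strongly connected directed graph that is α-balanced, meaning w(S, V∖S) ≤ α · w(V∖S, S) for every S ⊆ V, where w(S,T) is the total weight of edges from S to T. Let B be the weighted edge-vertex incidence matrix of G (row for edge e=(u,v) has entry w(e) at u and −w(e) at v). Then for every x ∈ {0,1}^V, ‖Bx‖₁ ≤ (1+α) · ρ₀(Bx), where ρ₀(y) = Σᵢ max(yᵢ, 0). -/
import Mathlib


theorem balanced_graph_l1_vs_rho0
    (V ι : Type*) [Fintype V] [Fintype ι] [DecidableEq V]
    (src tgt : ι → V) (w : ι → ℝ) (hw : ∀ e, 0 < w e)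
    (hst : ∀ e, src e ≠ tgt e)
    (α : ℝ) (hα : 1 ≤ α)
    (hbal : ∀ S : Finset V,
      ∑ e ∈ Finset.univ.filter (fun e => src e ∈ S ∧ tgt e ∉ S), w e ≤
        α * ∑ e ∈ Finset.univ.filter (fun e => src e ∉ S ∧ tgt e ∈ S), w e)
    (B : Matrix ι V ℝ)
    (hB : ∀ e u, B e u = if u = src e then w e else if u = tgt e then -w e else 0)
    (x : V → ℝ) (hx : ∀ v, x v = 0 ∨ x v = 1) :
    ∑ e, |(B.mulVec x) e| ≤ (1 + α) * ∑ e, max ((B.mulVec x) e) 0 := by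
  classical
  set S : Finset V := Finset.univ.filter (fun v => x v = 1) with hS
  have hmem : ∀ v, v ∈ S ↔ x v = 1 := by
    intro v; simp [hS]
  have hnot : ∀ v, v ∉ S → x v = 0 := by
    intro v hv
    rcases hx v with h | h
    · exact h
    · exact absurd ((hmem v).2 h) hv
  have key : ∀ e, B.mulVec x e = w e * x (src e) - w e * x (tgt e) := by
    intro e
    have : B.mulVec x e = ∑ u, B e u * x u := rfl
    rw [this]
    have hsplit : ∀ u : V, B e u * x u =
        (if u = src e then w e * x u else 0) + (if u = tgt e then -w e * x u else 0) := by
      intro u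
      rw [hB]
      by_cases h1 : u = src e
      · subst h1
        rw [if_pos rfl, if_pos rfl, if_neg (hst e), add_zero]
      · by_cases h2 : u = tgt e
        · subst h2
          rw [if_neg h1, if_neg h1, if_pos rfl, if_pos rfl, zero_add]
        · rw [if_neg h1, if_neg h2, if_neg h1, if_neg h2, zero_mul, add_zero]
    rw [Finset.sum_congr rfl (fun u _ => hsplit u), Finset.sum_add_distrib]
    rw [Finset.sum_ite_eq' Finset.univ (src e) (fun u => w e * x u),
        Finset.sum_ite_eq' Finset.univ (tgt e) (fun u => -w e * x u)]
    simp; ring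
  have hpos : ∀ e, max (B.mulVec x e) 0 =
      if src e ∈ S ∧ tgt e ∉ S then w e else 0 := by
    intro e
    rw [key]
    by_cases h1 : src e ∈ S <;> by_cases h2 : tgt e ∈ S
    · rw [(hmem _).1 h1, (hmem _).1 h2]
      simp [h1, h2]
    · rw [(hmem _).1 h1, hnot _ h2]
      simp [h1, h2, le_of_lt (hw e)]
    · rw [hnot _ h1, (hmem _).1 h2]
      have := hw e
      simp only [h1, h2]
      simp only [mul_zero, mul_one, zero_sub, false_and, if_false]
      exact max_eq_right (by linarith)
    · rw [hnot _ h1, hnot _ h2]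
      simp [h1, h2]
  have hneg : ∀ e, max (-(B.mulVec x e)) 0 =
      if src e ∉ S ∧ tgt e ∈ S then w e else 0 := by
    intro e
    rw [key]
    by_cases h1 : src e ∈ S <;> by_cases h2 : tgt e ∈ S
    · rw [(hmem _).1 h1, (hmem _).1 h2]
      simp [h1, h2]
    · rw [(hmem _).1 h1, hnot _ h2]
      have := hw e
      simp only [h1, h2]
      simp only [mul_zero, mul_one, sub_zero, not_false_iff, and_false, if_false]
      exact max_eq_right (by linarith)
    · rw [hnot _ h1, (hmem _).1 h2]
      simp [h1, h2, le_of_lt (hw e)]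
    · rw [hnot _ h1, hnot _ h2]
      simp [h1, h2]
  have habs : ∀ e, |B.mulVec x e| = max (B.mulVec x e) 0 + max (-(B.mulVec x e)) 0 := by
    intro e
    rcases le_total (B.mulVec x e) 0 with h | h
    · rw [abs_of_nonpos h, max_eq_right h, max_eq_left (by linarith)]; ring
    · rw [abs_of_nonneg h, max_eq_left h, max_eq_right (by linarith)]; ring
  have hP : ∑ e, max (B.mulVec x e) 0 =
      ∑ e ∈ Finset.univ.filter (fun e => src e ∈ S ∧ tgt e ∉ S), w e := by
    rw [Finset.sum_filter]
    exact Finset.sum_congr rfl fun e _ => hpos e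
  have hN : ∑ e, max (-(B.mulVec x e)) 0 =
      ∑ e ∈ Finset.univ.filter (fun e => src e ∉ S ∧ tgt e ∈ S), w e := by
    rw [Finset.sum_filter]
    exact Finset.sum_congr rfl fun e _ => hneg e
  have hbalc := hbal Sᶜ
  have hfilt1 : Finset.univ.filter (fun e => src e ∈ Sᶜ ∧ tgt e ∉ Sᶜ) =
      Finset.univ.filter (fun e => src e ∉ S ∧ tgt e ∈ S) := by
    apply Finset.filter_congr
    intro e _
    simp [Finset.mem_compl]
  have hfilt2 : Finset.univ.filter (fun e => src e ∉ Sᶜ ∧ tgt e ∈ Sᶜ) =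
      Finset.univ.filter (fun e => src e ∈ S ∧ tgt e ∉ S) := by
    apply Finset.filter_congr
    intro e _
    simp [Finset.mem_compl]
  rw [hfilt1, hfilt2] at hbalc
  calc ∑ e, |B.mulVec x e|
      = ∑ e, max (B.mulVec x e) 0 + ∑ e, max (-(B.mulVec x e)) 0 := by
        rw [← Finset.sum_add_distrib]
        exact Finset.sum_congr rfl fun e _ => habs e
    _ ≤ ∑ e, max (B.mulVec x e) 0 + α * ∑ e, max (B.mulVec x e) 0 := by
        rw [hN, hP]; linarith [hbalc]
    _ = (1 + α) * ∑ e, max (B.mulVec x e) 0 := by ring
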